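/- Let φ be a nonnegative Schwartz function on ℝ², and let p_u(x) = (4πu)^{−1} exp(−‖x‖²/(4u)) for u > 0. Then lim_{T→∞} (1/log T) ∫_{‖x‖² > T} ( ∫₀^T ∫_{ℝ²} p_u(x−y) φ(y) dy du ) ‖x‖^{−2} dx = 0. -/

import Mathlib

open MeasureTheory Real Filter

local notation "E2" => EuclideanSpace ℝ (Fin 2)

lemma gauss_integrable {u : ℝ} (hu : 0 < u) (y : E2) :
    Integrable (fun x : E2 => (4 * π * u)⁻¹ * Real.exp (-‖x - y‖ ^ 2 / (4 * u))) := by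
  have hb : (0:ℝ) < (4 * u)⁻¹ := by positivity
  have h0 : Integrable (fun x : E2 => Real.exp (-((4*u)⁻¹) * ‖x‖ ^ 2)) := by
    have := (GaussianFourier.integrable_cexp_neg_mul_sq_norm_add (V := E2)
      (b := ((4*u)⁻¹ : ℝ)) (by simpa using hb) 0 0).norm
    refine this.congr (Eventually.of_forall fun x => ?_)
    simp [Complex.norm_exp]
    left
    rw [← Complex.ofReal_pow, Complex.ofReal_re]
  have h1 : ∀ x : E2, -‖x - y‖ ^ 2 / (4 * u) = -((4*u)⁻¹) * ‖x - y‖ ^ 2 := by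
    intro x; field_simp
  simp_rw [h1]
  exact (h0.comp_sub_right y).const_mul _

lemma gauss_total {u : ℝ} (hu : 0 < u) (y : E2) :
    ∫ x : E2, (4 * π * u)⁻¹ * Real.exp (-‖x - y‖ ^ 2 / (4 * u)) = 1 := by
  have hb : (0:ℝ) < (4 * u)⁻¹ := by positivity
  have h1 : ∀ x : E2, -‖x - y‖ ^ 2 / (4 * u) = -((4*u)⁻¹ * ‖x - y‖ ^ 2) := by
    intro x; field_simp
  simp_rw [h1, integral_const_mul]
  rw [integral_sub_right_eq_self (fun x : E2 => Real.exp (-((4*u)⁻¹ * ‖x‖^2))) y]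
  simp_rw [← neg_mul]
  rw [GaussianFourier.integral_rexp_neg_mul_sq_norm hb]
  have h2 : (Module.finrank ℝ E2 : ℝ) / 2 = 1 := by simp
  rw [h2, Real.rpow_one]
  field_simp

lemma gauss_ltotal {u : ℝ} (hu : 0 < u) (y : E2) :
    ∫⁻ x : E2, ENNReal.ofReal ((4 * π * u)⁻¹ * Real.exp (-‖x - y‖ ^ 2 / (4 * u))) = 1 := by
  rw [← ofReal_integral_eq_lintegral_ofReal (gauss_integrable hu y)
    (Eventually.of_forall fun x => by positivity), gauss_total hu y, ENNReal.ofReal_one]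

lemma meas_f (φ : SchwartzMap E2 ℝ) : Measurable (fun p : (ℝ × E2) × E2 =>
    (4 * π * p.1.1)⁻¹ * Real.exp (-‖p.1.2 - p.2‖ ^ 2 / (4 * p.1.1)) * φ p.2) := by
  have hφ : Measurable fun p : (ℝ × E2) × E2 => φ p.2 :=
    φ.continuous.measurable.comp measurable_snd
  fun_prop

lemma key_bound (φ : SchwartzMap E2 ℝ) (hφ : ∀ y, 0 ≤ φ y) {T : ℝ} (hT : 0 < T) :
    ∫ x in {x : E2 | T < ‖x‖ ^ 2},
      (∫ u in Set.Ioc (0 : ℝ) T, ∫ y : E2,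
        (4 * π * u)⁻¹ * Real.exp (-‖x - y‖ ^ 2 / (4 * u)) * φ y) * (‖x‖ ^ 2)⁻¹
      ≤ ∫ y : E2, φ y := by
  have habs0 : ∀ x : E2, (∫ u in Set.Ioc (0 : ℝ) T, ∫ y : E2,
      (4 * π * u)⁻¹ * Real.exp (-‖x - y‖ ^ 2 / (4 * u)) * φ y)
      = ∫ u in Set.Ioc (0 : ℝ) T, ∫ y : E2,
      (4 * π * |u|)⁻¹ * Real.exp (-‖x - y‖ ^ 2 / (4 * |u|)) * φ y := by
    intro x
    refine setIntegral_congr_fun measurableSet_Ioc fun u hu => ?_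
    rw [abs_of_pos hu.1]
  simp only [habs0]
  set f : (ℝ × E2) × E2 → ℝ := fun p =>
    (4 * π * |p.1.1|)⁻¹ * Real.exp (-‖p.1.2 - p.2‖ ^ 2 / (4 * |p.1.1|)) * φ p.2 with hfdef
  have hfm : Measurable f := by
    have := meas_f φ
    have habs : Measurable fun p : (ℝ × E2) × E2 => ((|p.1.1|, p.1.2), p.2) := by fun_prop
    exact (meas_f φ).comp habs
  have hf0 : ∀ p, 0 ≤ f p := fun p =>
    mul_nonneg (mul_nonneg (by positivity) (Real.exp_nonneg _)) (hφ _)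
  set I : ℝ × E2 → ℝ := fun p => ∫ y, f (p, y) with hIdef
  have hIm : StronglyMeasurable I := hfm.stronglyMeasurable.integral_prod_right'
  have hI0 : ∀ p, 0 ≤ I p := fun p => integral_nonneg fun y => hf0 _
  set J : ℝ × E2 → ENNReal := fun p => ∫⁻ y, ENNReal.ofReal (f (p, y)) with hJdef
  have hJm : Measurable J := hfm.ennreal_ofReal.lintegral_prod_right'
  have hIJ : ∀ p, I p = (J p).toReal := fun p =>
    integral_eq_lintegral_of_nonneg_ae (ae_of_all _ fun y => hf0 _)
      ((hfm.comp measurable_prodMk_left).aestronglyMeasurable)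
  set g : E2 → ℝ := fun x => ∫ u in Set.Ioc (0 : ℝ) T, I (u, x) with hgdef
  have hgm : StronglyMeasurable g := hIm.integral_prod_left'
  have hg0 : ∀ x, 0 ≤ g x := fun x => integral_nonneg fun u => hI0 _
  set L : E2 → ENNReal := fun x => ∫⁻ u in Set.Ioc (0 : ℝ) T, J (u, x) with hLdef
  have hLm : Measurable L := hJm.lintegral_prod_left'
  have hgL : ∀ x, ENNReal.ofReal (g x) ≤ L x := by
    intro x
    have h1 : g x = (∫⁻ u in Set.Ioc (0 : ℝ) T, ENNReal.ofReal (I (u, x))).toReal :=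
      integral_eq_lintegral_of_nonneg_ae (ae_of_all _ fun u => hI0 _)
        ((hIm.comp_measurable (measurable_id.prodMk measurable_const)).aestronglyMeasurable)
    rw [h1]
    refine le_trans ENNReal.ofReal_toReal_le (lintegral_mono fun u => ?_)
    rw [hIJ (u, x)]
    exact ENNReal.ofReal_toReal_le
  set C : ENNReal := ∫⁻ y : E2, ENNReal.ofReal (φ y) with hCdef
  have hL : ∫⁻ x, L x ≤ ENNReal.ofReal T * C := by
    have hswap : ∫⁻ x, L x = ∫⁻ u in Set.Ioc (0 : ℝ) T, ∫⁻ x, J (u, x) :=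
      lintegral_lintegral_swap ((hJm.comp measurable_swap).aemeasurable)
    rw [hswap]
    have hinner : ∀ u ∈ Set.Ioc (0 : ℝ) T, ∫⁻ x, J (u, x) = C := by
      intro u hu
      have hu0 : 0 < u := hu.1
      have hswap2 : ∫⁻ x : E2, J (u, x)
          = ∫⁻ y : E2, ∫⁻ x : E2, ENNReal.ofReal (f ((u, x), y)) :=
        lintegral_lintegral_swap
          ((hfm.comp ((measurable_const.prodMk measurable_fst).prodMk
            measurable_snd)).ennreal_ofReal.aemeasurable)
      rw [hswap2]
      refine lintegral_congr fun y => ?_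
      have habs : |u| = u := abs_of_pos hu0
      have hpt : ∀ x : E2, ENNReal.ofReal (f ((u, x), y))
          = ENNReal.ofReal ((4 * π * u)⁻¹ * Real.exp (-‖x - y‖ ^ 2 / (4 * u)))
            * ENNReal.ofReal (φ y) := by
        intro x
        rw [hfdef]
        simp only [habs]
        exact ENNReal.ofReal_mul (by positivity)
      simp_rw [hpt]
      rw [lintegral_mul_const _ (by fun_prop), gauss_ltotal hu0 y, one_mul]
    rw [setLIntegral_congr_fun measurableSet_Ioc hinner, setLIntegral_const,
      Real.volume_Ioc, sub_zero, mul_comm]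
  set S : Set E2 := {x : E2 | T < ‖x‖ ^ 2} with hSdef
  have hS : MeasurableSet S := measurableSet_lt measurable_const (by fun_prop)
  have hmain : ∫ x in S, g x * (‖x‖ ^ 2)⁻¹
      = (∫⁻ x in S, ENNReal.ofReal (g x * (‖x‖ ^ 2)⁻¹)).toReal :=
    integral_eq_lintegral_of_nonneg_ae (ae_of_all _ fun x => mul_nonneg (hg0 x) (by positivity))
      ((hgm.mul ((measurable_norm.pow_const 2).inv.stronglyMeasurable)).aestronglyMeasurable)
  have hle1 : ∫⁻ x in S, ENNReal.ofReal (g x * (‖x‖ ^ 2)⁻¹)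
      ≤ ∫⁻ x in S, L x * ENNReal.ofReal T⁻¹ := by
    refine setLIntegral_mono' hS fun x hx => ?_
    rw [ENNReal.ofReal_mul (hg0 x)]
    exact mul_le_mul' (hgL x)
      (ENNReal.ofReal_le_ofReal (inv_anti₀ hT (le_of_lt hx)))
  have hle2 : ∫⁻ x in S, L x * ENNReal.ofReal T⁻¹
      ≤ ENNReal.ofReal T * C * ENNReal.ofReal T⁻¹ := by
    rw [lintegral_mul_const _ hLm]
    exact mul_le_mul_left ((setLIntegral_le_lintegral S L).trans hL) _
  have hTT : ENNReal.ofReal T * C * ENNReal.ofReal T⁻¹ = C := by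
    rw [mul_comm (ENNReal.ofReal T) C, mul_assoc, ← ENNReal.ofReal_mul hT.le,
      mul_inv_cancel₀ hT.ne', ENNReal.ofReal_one, mul_one]
  have hCfin : C ≠ ⊤ := by
    refine ne_of_lt (lt_of_le_of_lt (lintegral_mono fun y => ?_) (φ.integrable (μ := volume)).2)
    rw [← ofReal_norm_eq_enorm]
    exact ENNReal.ofReal_le_ofReal (le_abs_self _)
  have hφint : ∫ y : E2, φ y = C.toReal :=
    integral_eq_lintegral_of_nonneg_ae (ae_of_all _ hφ) φ.continuous.aestronglyMeasurable
  calc ∫ x in S, g x * (‖x‖ ^ 2)⁻¹ = (∫⁻ x in S, ENNReal.ofReal (g x * (‖x‖ ^ 2)⁻¹)).toReal :=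
        hmain
    _ ≤ C.toReal := ENNReal.toReal_mono hCfin (le_trans hle1 (le_trans hle2 hTT.le))
    _ = ∫ y : E2, φ y := hφint.symm


/-- Property (3.43) in the critical case d = α = 2 (planar Brownian motion):
`lim_{T→∞} (1/log T) ∫_{‖x‖²>T} (∫₀^T T_u φ(x) du) ‖x‖⁻² dx = 0`. -/
theorem brownian_semigroup_tail_limit (φ : SchwartzMap (EuclideanSpace ℝ (Fin 2)) ℝ)
    (hφ : ∀ y, 0 ≤ φ y) :
    Tendsto (fun T : ℝ =>
      (1 / Real.log T) *
        ∫ x in {x : EuclideanSpace ℝ (Fin 2) | T < ‖x‖ ^ 2},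
          (∫ u in Set.Ioc (0 : ℝ) T, ∫ y : EuclideanSpace ℝ (Fin 2),
            (4 * π * u)⁻¹ * Real.exp (-‖x - y‖ ^ 2 / (4 * u)) * φ y) * (‖x‖ ^ 2)⁻¹)
      atTop (nhds 0) := by

  set F : ℝ → ℝ := fun T =>
    ∫ x in {x : E2 | T < ‖x‖ ^ 2},
      (∫ u in Set.Ioc (0 : ℝ) T, ∫ y : E2,
        (4 * π * u)⁻¹ * Real.exp (-‖x - y‖ ^ 2 / (4 * u)) * φ y) * (‖x‖ ^ 2)⁻¹ with hF
  have hF0 : ∀ T : ℝ, 0 ≤ F T := by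
    intro T
    refine integral_nonneg fun x => mul_nonneg ?_ (by positivity)
    refine setIntegral_nonneg measurableSet_Ioc fun u hu => ?_
    refine integral_nonneg fun y => ?_
    have hu0 : 0 < u := hu.1
    have : (0:ℝ) ≤ (4 * π * u)⁻¹ := by positivity
    exact mul_nonneg (mul_nonneg this (Real.exp_nonneg _)) (hφ y)
  have hlim : Tendsto (fun T : ℝ => (1 / Real.log T) * ∫ y : E2, φ y) atTop (nhds 0) := by
    have h1 : Tendsto (fun T : ℝ => (Real.log T)⁻¹) atTop (nhds 0) :=
      Real.tendsto_log_atTop.inv_tendsto_atTop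
    have h2 := h1.mul_const (∫ y : E2, φ y)
    rw [zero_mul] at h2
    simpa [one_div] using h2
  refine tendsto_of_tendsto_of_tendsto_of_le_of_le' tendsto_const_nhds hlim ?_ ?_
  · filter_upwards [eventually_ge_atTop (2:ℝ)] with T hT
    have hlog : 0 < Real.log T := Real.log_pos (by linarith)
    exact mul_nonneg (by positivity) (hF0 T)
  · filter_upwards [eventually_ge_atTop (2:ℝ)] with T hT
    have hlog : 0 < Real.log T := Real.log_pos (by linarith)
    exact mul_le_mul_of_nonneg_left (key_bound φ hφ (by linarith)) (by positivity)
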